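/- For every n ≥ 1, the graph H_n defined as follows contains no induced diamond (the complement of 2P_1+P_2): vertices are B_1 = {b_1,…,b_n}, W_1 = {w_1,…,w_n}, and for 1 ≤ i,j ≤ n vertices b_{i,j}, r_{i,j}, w_{i,j}; the edges are: b_{i,j}r_{i,j} and r_{i,j}w_{i,j} for all i,j; b_k w_{i,j} whenever i ≤ k; w_k b_{i,j} whenever j ≤ k; and b_{i,j} w_{k,ℓ} whenever (i,j) ≠ (k,ℓ). -/
import Mathlib


/-- Vertices of `Hn n`: `B₁ = Fin n` (the `b k`), `W₁ = Fin n` (the `w k`),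
and `B₂`, `R₂`, `W₂` indexed by `Fin n × Fin n` (the `b (i,j)`, `r (i,j)`,
`w (i,j)` respectively). -/
abbrev HnV (n : ℕ) :=
  Fin n ⊕ Fin n ⊕ (Fin n × Fin n) ⊕ (Fin n × Fin n) ⊕ (Fin n × Fin n)

/-- The graph `Hn n` with edges: `b (i,j) – r (i,j)` and `r (i,j) – w (i,j)`
for all `i, j`; `b k – w (i,j)` whenever `i ≤ k`; `w k – b (i,j)` whenever
`j ≤ k`; and `b (i,j) – w (k,ℓ)` whenever `(i,j) ≠ (k,ℓ)`. -/
def Hn (n : ℕ) : SimpleGraph (HnV n) :=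
  SimpleGraph.fromRel (fun u v =>
    match u, v with
    | Sum.inl k, Sum.inr (Sum.inr (Sum.inr (Sum.inr (i, _)))) => i ≤ k
    | Sum.inr (Sum.inl k), Sum.inr (Sum.inr (Sum.inl (_, j))) => j ≤ k
    | Sum.inr (Sum.inr (Sum.inl p)), Sum.inr (Sum.inr (Sum.inr (Sum.inl q))) => p = q
    | Sum.inr (Sum.inr (Sum.inr (Sum.inl p))), Sum.inr (Sum.inr (Sum.inr (Sum.inr q))) => p = q
    | Sum.inr (Sum.inr (Sum.inl p)), Sum.inr (Sum.inr (Sum.inr (Sum.inr q))) => p ≠ q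
    | _, _ => False)

/-- The diamond, i.e. the complement of 2P₁ + P₂: four vertices with all pairs
adjacent except one. -/
def diamond : SimpleGraph (Fin 4) :=
  SimpleGraph.fromRel (fun a b => (a.val, b.val) ∈ [(0,1),(0,2),(0,3),(1,2),(1,3)])

set_option maxHeartbeats 1000000 in
lemma Hn_notri (n : ℕ) (a b c : HnV n) (hab : (Hn n).Adj a b) (hac : (Hn n).Adj a c)
    (hbc : (Hn n).Adj b c) : False := by
  rcases a with k | k | p | p | p <;> rcases b with k' | k' | q | q | q <;>
    rcases c with k'' | k'' | r | r | r <;>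
    simp only [Hn, SimpleGraph.fromRel_adj, ne_eq] at hab hac hbc <;>
    first
    | tauto
    | (obtain ⟨-, h1 | h1⟩ := hab <;> obtain ⟨-, h2 | h2⟩ := hac <;>
       obtain ⟨-, h3 | h3⟩ := hbc <;> subst_vars <;> simp_all)

theorem statement_16 (n : ℕ) (hn : 1 ≤ n) :
    IsEmpty (diamond ↪g Hn n) := by
  constructor
  intro f
  exact Hn_notri n (f 0) (f 1) (f 2)
    (f.map_adj_iff.2 (by simp [diamond])) (f.map_adj_iff.2 (by simp [diamond])) (f.map_adj_iff.2 (by simp [diamond]))
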